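/- arXiv:1908.06275 — 11 statements merged into one kernel-verified Lean document; each statement's English description precedes it below -/
import Mathlib

section
/- Let F be a specification with n outputs and m inputs, and let F̂ be a positive form of F such that F is in SynNNF w.r.t. F̂. Then for every i : Fin n the i-th quantification identity holds: for all X : Fin n → Bool and Y : Fin m → Bool, (∃ b : Fin n → Bool, F (fun ℓ => if ℓ ≤ i then b ℓ else X ℓ) Y = true) ↔ F̂ (fun ℓ => if ℓ ≤ i then true else X ℓ) (fun ℓ => if ℓ ≤ i then true else !(X ℓ)) Y = true. -/
/-- Positive-unateness (monotonicity) of `Fh` in every coordinate of its first two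
arguments: changing any coordinate of `X` or `Xb` to `true` cannot change the
value of `Fh` from `true` to `false`. -/
def MonoPos {n m : ℕ} (Fh : (Fin n → Bool) → (Fin n → Bool) → (Fin m → Bool) → Bool) : Prop :=
  ∀ (X Xb : Fin n → Bool) (Y : Fin m → Bool) (i : Fin n),
    (Fh X Xb Y = true → Fh (Function.update X i true) Xb Y = true) ∧
    (Fh X Xb Y = true → Fh X (Function.update Xb i true) Y = true)

/-- `Fh` is a positive form of the specification `F`. -/
def PosForm {n m : ℕ} (F : (Fin n → Bool) → (Fin m → Bool) → Bool)
    (Fh : (Fin n → Bool) → (Fin n → Bool) → (Fin m → Bool) → Bool) : Prop :=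
  MonoPos Fh ∧ ∀ X Y, Fh X (fun j => !(X j)) Y = F X Y

/-- The function `αᵢ^{jk}` associated with the positive form `Fh`. -/
def alpha {n m : ℕ} (Fh : (Fin n → Bool) → (Fin n → Bool) → (Fin m → Bool) → Bool)
    (i : Fin n) (j k : Bool) (X : Fin n → Bool) (Y : Fin m → Bool) : Bool :=
  Fh (fun ℓ => if ℓ < i then true else if ℓ = i then j else X ℓ)
     (fun ℓ => if ℓ < i then true else if ℓ = i then k else !(X ℓ)) Y

/-- `F` is in SynNNF w.r.t. `Fh`: for every `i`, the `i`-th reduct is ∧ᵢ-unrealizable. -/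
def SynNNF {n m : ℕ} (Fh : (Fin n → Bool) → (Fin n → Bool) → (Fin m → Bool) → Bool) : Prop :=
  ∀ (i : Fin n) (X : Fin n → Bool) (Y : Fin m → Bool),
    alpha Fh i true true X Y = true →
      (alpha Fh i true false X Y = true ∨ alpha Fh i false true X Y = true)

lemma mono_finset_fst {n m : ℕ} {Fh : (Fin n → Bool) → (Fin n → Bool) → (Fin m → Bool) → Bool}
    (hm : MonoPos Fh) (Xb : Fin n → Bool) (Y : Fin m → Bool) (s : Finset (Fin n)) :
    ∀ X : Fin n → Bool, Fh X Xb Y = true → Fh (fun ℓ => if ℓ ∈ s then true else X ℓ) Xb Y = true := by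
  induction s using Finset.induction_on with
  | empty => intro X h; simpa using h
  | @insert a s ha ih =>
    intro X h
    have h2 := (hm _ Xb Y a).1 (ih X h)
    have : (fun ℓ => if ℓ ∈ insert a s then true else X ℓ)
        = Function.update (fun ℓ => if ℓ ∈ s then true else X ℓ) a true := by
      funext ℓ
      by_cases hl : ℓ = a
      · subst hl; simp [Function.update]
      · simp [Function.update, hl, Finset.mem_insert]
    rw [this]; exact h2

lemma mono_finset_snd {n m : ℕ} {Fh : (Fin n → Bool) → (Fin n → Bool) → (Fin m → Bool) → Bool}
    (hm : MonoPos Fh) (X : Fin n → Bool) (Y : Fin m → Bool) (s : Finset (Fin n)) :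
    ∀ Xb : Fin n → Bool, Fh X Xb Y = true → Fh X (fun ℓ => if ℓ ∈ s then true else Xb ℓ) Y = true := by
  induction s using Finset.induction_on with
  | empty => intro Xb h; simpa using h
  | @insert a s ha ih =>
    intro Xb h
    have h2 := (hm X _ Y a).2 (ih Xb h)
    have : (fun ℓ => if ℓ ∈ insert a s then true else Xb ℓ)
        = Function.update (fun ℓ => if ℓ ∈ s then true else Xb ℓ) a true := by
      funext ℓ
      by_cases hl : ℓ = a
      · subst hl; simp [Function.update]
      · simp [Function.update, hl, Finset.mem_insert]
    rw [this]; exact h2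

lemma mono_le {n m : ℕ} {Fh : (Fin n → Bool) → (Fin n → Bool) → (Fin m → Bool) → Bool}
    (hm : MonoPos Fh) {X X' Xb Xb' : Fin n → Bool} {Y : Fin m → Bool}
    (h1 : ∀ ℓ, X ℓ = true → X' ℓ = true) (h2 : ∀ ℓ, Xb ℓ = true → Xb' ℓ = true)
    (h : Fh X Xb Y = true) : Fh X' Xb' Y = true := by
  have e1 : (fun ℓ => if ℓ ∈ Finset.univ.filter (fun ℓ => X' ℓ = true) then true else X ℓ) = X' := by
    funext ℓ
    by_cases hl : X' ℓ = true
    · simp [hl]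
    · simp [hl]
      cases hx : X ℓ
      · cases hy : X' ℓ
        · rfl
        · exact absurd hy hl
      · exact absurd (h1 ℓ hx) hl
  have e2 : (fun ℓ => if ℓ ∈ Finset.univ.filter (fun ℓ => Xb' ℓ = true) then true else Xb ℓ) = Xb' := by
    funext ℓ
    by_cases hl : Xb' ℓ = true
    · simp [hl]
    · simp [hl]
      cases hx : Xb ℓ
      · cases hy : Xb' ℓ
        · rfl
        · exact absurd hy hl
      · exact absurd (h2 ℓ hx) hl
  have hA : Fh X' Xb Y = true := by
    have := mono_finset_fst hm Xb Y (Finset.univ.filter (fun ℓ => X' ℓ = true)) X h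
    rwa [e1] at this
  have := mono_finset_snd hm X' Y (Finset.univ.filter (fun ℓ => Xb' ℓ = true)) Xb hA
  rwa [e2] at this

lemma not_le_of_fin {n : ℕ} {ℓ i : Fin n} (h1 : ¬ ℓ < i) (h2 : ℓ ≠ i) : ¬ ℓ ≤ i :=
  fun h => h2 (le_antisymm h (not_lt.mp h1))

lemma merge_update {n : ℕ} (X : Fin n → Bool) (i : Fin n) (j : Bool) :
    (fun ℓ => if ℓ ≤ i then Function.update X i j ℓ else X ℓ) = Function.update X i j := by
  funext ℓ
  by_cases h : ℓ ≤ i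
  · simp [h]
  · have h2 : ℓ ≠ i := fun e => h (e ▸ le_refl i)
    simp [h, Function.update, h2]

lemma alpha_eq {n m : ℕ} (Fh : (Fin n → Bool) → (Fin n → Bool) → (Fin m → Bool) → Bool)
    (i : Fin n) (j : Bool) (X : Fin n → Bool) (Y : Fin m → Bool) :
    alpha Fh i j (!j) X Y
      = Fh (fun ℓ => if ℓ < i then true else Function.update X i j ℓ)
           (fun ℓ => if ℓ < i then true else !(Function.update X i j ℓ)) Y := by
  unfold alpha
  congr 1 <;> funext ℓ <;> by_cases h2 : ℓ = i
  · subst h2; simp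
  · simp [Function.update, h2]
  · subst h2; simp
  · simp [Function.update, h2]

lemma alpha_one_one {n m : ℕ} (Fh : (Fin n → Bool) → (Fin n → Bool) → (Fin m → Bool) → Bool)
    (i : Fin n) (X : Fin n → Bool) (Y : Fin m → Bool) :
    alpha Fh i true true X Y
      = Fh (fun ℓ => if ℓ ≤ i then true else X ℓ) (fun ℓ => if ℓ ≤ i then true else !(X ℓ)) Y := by
  unfold alpha
  congr 1 <;> funext ℓ <;> by_cases h1 : ℓ < i
  · simp [h1, le_of_lt h1]
  · by_cases h2 : ℓ = i
    · simp [h1, h2]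
    · simp [h1, h2, not_le_of_fin h1 h2]
  · simp [h1, le_of_lt h1]
  · by_cases h2 : ℓ = i
    · simp [h1, h2]
    · simp [h1, h2, not_le_of_fin h1 h2]

lemma back {n m : ℕ} (F : (Fin n → Bool) → (Fin m → Bool) → Bool)
    (Fh : (Fin n → Bool) → (Fin n → Bool) → (Fin m → Bool) → Bool)
    (hpos : PosForm F Fh) (hsyn : SynNNF Fh) :
    ∀ (k : ℕ) (i : Fin n), i.val = k → ∀ (X : Fin n → Bool) (Y : Fin m → Bool),
      Fh (fun ℓ => if ℓ ≤ i then true else X ℓ) (fun ℓ => if ℓ ≤ i then true else !(X ℓ)) Y = true →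
      ∃ b : Fin n → Bool, F (fun ℓ => if ℓ ≤ i then b ℓ else X ℓ) Y = true := by
  intro k
  induction k with
  | zero =>
    intro i hi X Y h
    have h11 : alpha Fh i true true X Y = true := by rw [alpha_one_one]; exact h
    have hnolt : ∀ ℓ : Fin n, ¬ ℓ < i := by
      intro ℓ hℓ; rw [Fin.lt_def, hi] at hℓ; omega
    have key : ∀ j : Bool, alpha Fh i j (!j) X Y = true →
        ∃ b : Fin n → Bool, F (fun ℓ => if ℓ ≤ i then b ℓ else X ℓ) Y = true := by
      intro j hc
      rw [alpha_eq] at hc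
      simp only [hnolt, if_false] at hc
      refine ⟨Function.update X i j, ?_⟩
      rw [merge_update, ← hpos.2]
      exact hc
    rcases hsyn i X Y h11 with hc | hc
    · exact key true hc
    · exact key false hc
  | succ k ih =>
    intro i hi X Y h
    have h11 : alpha Fh i true true X Y = true := by rw [alpha_one_one]; exact h
    have hkn : k < n := by have := i.isLt; omega
    set i' : Fin n := ⟨k, hkn⟩ with hi'
    have hlt : ∀ ℓ : Fin n, ℓ < i ↔ ℓ ≤ i' := by
      intro ℓ; rw [Fin.lt_def, Fin.le_def, hi]; simp [hi']
    have key : ∀ j : Bool, alpha Fh i j (!j) X Y = true →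
        ∃ b : Fin n → Bool, F (fun ℓ => if ℓ ≤ i then b ℓ else X ℓ) Y = true := by
      intro j hc
      rw [alpha_eq] at hc
      simp only [hlt] at hc
      obtain ⟨b, hb⟩ := ih i' rfl (Function.update X i j) Y hc
      refine ⟨Function.update b i j, ?_⟩
      have heq : (fun ℓ => if ℓ ≤ i then Function.update b i j ℓ else X ℓ)
          = (fun ℓ => if ℓ ≤ i' then b ℓ else Function.update X i j ℓ) := by
        funext ℓ
        by_cases h2 : ℓ = i
        · subst h2
          have hni' : ¬ ℓ ≤ i' := by rw [Fin.le_def]; simp [hi']; omega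
          simp [hni']
        · by_cases h3 : ℓ ≤ i'
          · have h4 : ℓ ≤ i := le_of_lt ((hlt ℓ).mpr h3)
            simp [h3, h4, Function.update, h2]
          · have h4 : ¬ ℓ ≤ i := not_le_of_fin (fun hh => h3 ((hlt ℓ).mp hh)) h2
            simp [h3, h4, Function.update, h2]
      rw [heq]; exact hb
    rcases hsyn i X Y h11 with hc | hc
    · exact key true hc
    · exact key false hc

/-- If `F` is in SynNNF w.r.t. its positive form `Fh`, then for every `i` the
`i`-th quantification identity holds. -/
theorem synnnf_quantification_identity {n m : ℕ}
    (F : (Fin n → Bool) → (Fin m → Bool) → Bool)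
    (Fh : (Fin n → Bool) → (Fin n → Bool) → (Fin m → Bool) → Bool)
    (hpos : PosForm F Fh) (hsyn : SynNNF Fh) :
    ∀ (i : Fin n) (X : Fin n → Bool) (Y : Fin m → Bool),
      (∃ b : Fin n → Bool, F (fun ℓ => if ℓ ≤ i then b ℓ else X ℓ) Y = true) ↔
        Fh (fun ℓ => if ℓ ≤ i then true else X ℓ)
           (fun ℓ => if ℓ ≤ i then true else !(X ℓ)) Y = true := by
  intro i X Y
  constructor
  · rintro ⟨b, hb⟩
    have hFh : Fh (fun ℓ => if ℓ ≤ i then b ℓ else X ℓ)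
        (fun ℓ => !(if ℓ ≤ i then b ℓ else X ℓ)) Y = true := by
      rw [hpos.2]; exact hb
    refine mono_le hpos.1 ?_ ?_ hFh
    · intro ℓ hℓ
      by_cases h : ℓ ≤ i
      · simp [h]
      · simp only [if_neg h] at hℓ ⊢; exact hℓ
    · intro ℓ hℓ
      by_cases h : ℓ ≤ i
      · simp [h]
      · simp only [if_neg h] at hℓ ⊢; exact hℓ
  · exact back F Fh hpos hsyn i.val i rfl X Y
end

section
/- Let F be a specification with n outputs and m inputs, and let F̂ be a positive form of F. Then F is in SynNNF w.r.t. F̂ if and only if for every i : Fin n the i-th quantification identity holds: for all X : Fin n → Bool and Y : Fin m → Bool, (∃ b : Fin n → Bool, F (fun ℓ => if ℓ ≤ i then b ℓ else X ℓ) Y = true) ↔ F̂ (fun ℓ => if ℓ ≤ i then true else X ℓ) (fun ℓ => if ℓ ≤ i then true else !(X ℓ)) Y = true. -/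
section Aux
variable {n m : ℕ} {Fh : (Fin n → Bool) → (Fin n → Bool) → (Fin m → Bool) → Bool}
lemma mono_fst (h : MonoPos Fh) (X X' Xb : Fin n → Bool) (Y : Fin m → Bool)
    (hle : ∀ ℓ, X ℓ = true → X' ℓ = true) (hF : Fh X Xb Y = true) :
    Fh X' Xb Y = true := by
  have key : ∀ s : Finset (Fin n),
      Fh (fun ℓ => if ℓ ∈ s then X' ℓ || X ℓ else X ℓ) Xb Y = true := by
    intro s
    induction s using Finset.induction_on with
    | empty => simpa using hF
    | @insert a s ha ih =>
      
      have hupd : (fun ℓ => if ℓ ∈ insert a s then X' ℓ || X ℓ else X ℓ)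
          = Function.update (fun ℓ => if ℓ ∈ s then X' ℓ || X ℓ else X ℓ) a (X' a || X a) := by
        funext ℓ
        by_cases hℓ : ℓ = a
        · subst hℓ; simp [Function.update, ha]
        · simp [Function.update, hℓ, Finset.mem_insert]
      rw [hupd]
      cases hv : (X' a || X a) with
      | true => exact (h _ Xb Y a).1 ih
      | false =>
        have : Function.update (fun ℓ => if ℓ ∈ s then X' ℓ || X ℓ else X ℓ) a false
            = (fun ℓ => if ℓ ∈ s then X' ℓ || X ℓ else X ℓ) := by
          funext ℓ
          by_cases hℓ : ℓ = a
          · subst hℓ; simp [Function.update, ha]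
            simp [Bool.or_eq_false_iff] at hv
            exact hv.2
          · simp [Function.update, hℓ]
        rw [this]; exact ih
  have := key Finset.univ
  have heq : (fun ℓ => if ℓ ∈ (Finset.univ : Finset (Fin n)) then X' ℓ || X ℓ else X ℓ) = X' := by
    funext ℓ
    simp only [Finset.mem_univ, if_true]
    cases hX : X ℓ
    · simp
    · simp [hle ℓ hX]
  rwa [heq] at this
lemma mono_snd (h : MonoPos Fh) (X Xb Xb' : Fin n → Bool) (Y : Fin m → Bool)
    (hle : ∀ ℓ, Xb ℓ = true → Xb' ℓ = true) (hF : Fh X Xb Y = true) :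
    Fh X Xb' Y = true := by
  have key : ∀ s : Finset (Fin n),
      Fh X (fun ℓ => if ℓ ∈ s then Xb' ℓ || Xb ℓ else Xb ℓ) Y = true := by
    intro s
    induction s using Finset.induction_on with
    | empty => simpa using hF
    | @insert a s ha ih =>
      
      have hupd : (fun ℓ => if ℓ ∈ insert a s then Xb' ℓ || Xb ℓ else Xb ℓ)
          = Function.update (fun ℓ => if ℓ ∈ s then Xb' ℓ || Xb ℓ else Xb ℓ) a (Xb' a || Xb a) := by
        funext ℓ
        by_cases hℓ : ℓ = a
        · subst hℓ; simp [Function.update, ha]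
        · simp [Function.update, hℓ, Finset.mem_insert]
      rw [hupd]
      cases hv : (Xb' a || Xb a) with
      | true => exact (h X _ Y a).2 ih
      | false =>
        have : Function.update (fun ℓ => if ℓ ∈ s then Xb' ℓ || Xb ℓ else Xb ℓ) a false
            = (fun ℓ => if ℓ ∈ s then Xb' ℓ || Xb ℓ else Xb ℓ) := by
          funext ℓ
          by_cases hℓ : ℓ = a
          · subst hℓ; simp [Function.update, ha]
            simp [Bool.or_eq_false_iff] at hv
            exact hv.2
          · simp [Function.update, hℓ]
        rw [this]; exact ih
  have := key Finset.univ
  have heq : (fun ℓ => if ℓ ∈ (Finset.univ : Finset (Fin n)) then Xb' ℓ || Xb ℓ else Xb ℓ) = Xb' := by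
    funext ℓ
    simp only [Finset.mem_univ, if_true]
    cases hX : Xb ℓ
    · simp
    · simp [hle ℓ hX]
  rwa [heq] at this
lemma mono_both (h : MonoPos Fh) (X X' Xb Xb' : Fin n → Bool) (Y : Fin m → Bool)
    (h1 : ∀ ℓ, X ℓ = true → X' ℓ = true) (h2 : ∀ ℓ, Xb ℓ = true → Xb' ℓ = true)
    (hF : Fh X Xb Y = true) : Fh X' Xb' Y = true :=
  mono_snd h X' Xb Xb' Y h2 (mono_fst h X X' Xb Y h1 hF)
end Aux

section Beta
variable {n m : ℕ} {F : (Fin n → Bool) → (Fin m → Bool) → Bool}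
  {Fh : (Fin n → Bool) → (Fin n → Bool) → (Fin m → Bool) → Bool}

/-- `Fh` with all coordinates `< k` set to `true` in both arguments. -/
def beta (Fh : (Fin n → Bool) → (Fin n → Bool) → (Fin m → Bool) → Bool)
    (k : ℕ) (X : Fin n → Bool) (Y : Fin m → Bool) : Bool :=
  Fh (fun ℓ => if (ℓ : ℕ) < k then true else X ℓ)
     (fun ℓ => if (ℓ : ℕ) < k then true else !(X ℓ)) Y

lemma beta_zero (hpos : PosForm F Fh) (X : Fin n → Bool) (Y : Fin m → Bool) :
    beta Fh 0 X Y = F X Y := by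
  unfold beta
  simp only [Nat.not_lt_zero, if_false]
  exact hpos.2 X Y

lemma alpha_tt (i : Fin n) (X : Fin n → Bool) (Y : Fin m → Bool) :
    alpha Fh i true true X Y = beta Fh ((i : ℕ) + 1) X Y := by
  unfold alpha beta
  congr 1 <;> funext ℓ <;>
    rcases lt_trichotomy (ℓ : ℕ) (i : ℕ) with h | h | h
  · rw [if_pos (Fin.lt_def.mpr h), if_pos (by omega : (ℓ:ℕ) < (i:ℕ)+1)]
  · rw [if_neg (by rw [Fin.lt_def]; omega), if_pos (Fin.ext h),
      if_pos (by omega : (ℓ:ℕ) < (i:ℕ)+1)]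
  · rw [if_neg (by rw [Fin.lt_def]; omega), if_neg (by rw [Fin.ext_iff]; omega),
      if_neg (by omega : ¬ (ℓ:ℕ) < (i:ℕ)+1)]
  · rw [if_pos (Fin.lt_def.mpr h), if_pos (by omega : (ℓ:ℕ) < (i:ℕ)+1)]
  · rw [if_neg (by rw [Fin.lt_def]; omega), if_pos (Fin.ext h),
      if_pos (by omega : (ℓ:ℕ) < (i:ℕ)+1)]
  · rw [if_neg (by rw [Fin.lt_def]; omega), if_neg (by rw [Fin.ext_iff]; omega),
      if_neg (by omega : ¬ (ℓ:ℕ) < (i:ℕ)+1)]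

lemma alpha_upd (i : Fin n) (b : Bool) (X : Fin n → Bool) (Y : Fin m → Bool) :
    alpha Fh i b (!b) X Y = beta Fh (i : ℕ) (Function.update X i b) Y := by
  unfold alpha beta
  congr 1 <;> funext ℓ <;>
    rcases lt_trichotomy (ℓ : ℕ) (i : ℕ) with h | h | h
  · rw [if_pos (Fin.lt_def.mpr h), if_pos h]
  · have he : ℓ = i := Fin.ext h
    rw [if_neg (by rw [Fin.lt_def]; omega), if_pos he, if_neg (by omega), he,
      Function.update_self]
  · have he : ℓ ≠ i := by rw [Ne, Fin.ext_iff]; omega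
    rw [if_neg (by rw [Fin.lt_def]; omega), if_neg he, if_neg (by omega),
      Function.update_of_ne he]
  · rw [if_pos (Fin.lt_def.mpr h), if_pos h]
  · have he : ℓ = i := Fin.ext h
    rw [if_neg (by rw [Fin.lt_def]; omega), if_pos he, if_neg (by omega), he,
      Function.update_self]
  · have he : ℓ ≠ i := by rw [Ne, Fin.ext_iff]; omega
    rw [if_neg (by rw [Fin.lt_def]; omega), if_neg he, if_neg (by omega),
      Function.update_of_ne he]

lemma beta_of_F (hpos : PosForm F Fh) (k : ℕ) (X X' : Fin n → Bool) (Y : Fin m → Bool)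
    (hag : ∀ ℓ : Fin n, k ≤ (ℓ : ℕ) → X' ℓ = X ℓ) (hF : F X' Y = true) :
    beta Fh k X Y = true := by
  have h0 : Fh X' (fun j => !(X' j)) Y = true := by rw [hpos.2]; exact hF
  refine mono_both hpos.1 _ _ _ _ _ ?_ ?_ h0 <;> intro ℓ hℓ <;>
    by_cases hk : (ℓ : ℕ) < k <;> simp only [hk, if_pos, if_neg, if_true, if_false]
  · rw [← hag ℓ (le_of_not_gt hk)]; exact hℓ
  · rw [← hag ℓ (le_of_not_gt hk)]; exact hℓ

lemma exists_of_beta (hpos : PosForm F Fh) (hs : SynNNF Fh) :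
    ∀ k : ℕ, k ≤ n → ∀ (X : Fin n → Bool) (Y : Fin m → Bool), beta Fh k X Y = true →
      ∃ X' : Fin n → Bool, (∀ ℓ : Fin n, k ≤ (ℓ : ℕ) → X' ℓ = X ℓ) ∧ F X' Y = true := by
  intro k
  induction k with
  | zero =>
    intro _ X Y h
    exact ⟨X, fun ℓ _ => rfl, by rwa [beta_zero hpos] at h⟩
  | succ k ih =>
    intro hk X Y h
    have hkn : k < n := hk
    have h11 : alpha Fh ⟨k, hkn⟩ true true X Y = true := by rwa [alpha_tt]
    have key : ∀ b : Bool, beta Fh ((⟨k, hkn⟩ : Fin n) : ℕ) (Function.update X ⟨k, hkn⟩ b) Y = true →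
        ∃ X' : Fin n → Bool, (∀ ℓ : Fin n, k + 1 ≤ (ℓ : ℕ) → X' ℓ = X ℓ) ∧ F X' Y = true := by
      intro b h'
      rcases ih (le_of_lt hkn) (Function.update X ⟨k, hkn⟩ b) Y h' with ⟨X', hag, hF⟩
      refine ⟨X', fun ℓ hℓ => ?_, hF⟩
      have hne : ℓ ≠ ⟨k, hkn⟩ := by rw [Ne, Fin.ext_iff]; simp; omega
      rw [hag ℓ (Nat.le_of_succ_le hℓ), Function.update_of_ne hne]
    rcases hs ⟨k, hkn⟩ X Y h11 with h' | h'
    · exact key true (by rw [← alpha_upd]; exact h')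
    · exact key false (by rw [← alpha_upd]; exact h')

lemma rhs_eq_beta (i : Fin n) (X : Fin n → Bool) (Y : Fin m → Bool) :
    Fh (fun ℓ => if ℓ ≤ i then true else X ℓ)
       (fun ℓ => if ℓ ≤ i then true else !(X ℓ)) Y = beta Fh ((i : ℕ) + 1) X Y := by
  unfold beta
  congr 1 <;> funext ℓ <;> by_cases h : ℓ ≤ i
  · rw [if_pos h, if_pos (by rw [Fin.le_def] at h; omega)]
  · rw [if_neg h, if_neg (by rw [Fin.le_def] at h; omega)]
  · rw [if_pos h, if_pos (by rw [Fin.le_def] at h; omega)]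
  · rw [if_neg h, if_neg (by rw [Fin.le_def] at h; omega)]

end Beta

/-- `F` is in SynNNF w.r.t. its positive form `Fh` iff for every `i` the
`i`-th quantification identity holds. -/
theorem synnnf_iff_quantification_identity {n m : ℕ}
    (F : (Fin n → Bool) → (Fin m → Bool) → Bool)
    (Fh : (Fin n → Bool) → (Fin n → Bool) → (Fin m → Bool) → Bool)
    (hpos : PosForm F Fh) :
    SynNNF Fh ↔
      ∀ (i : Fin n) (X : Fin n → Bool) (Y : Fin m → Bool),
        (∃ b : Fin n → Bool, F (fun ℓ => if ℓ ≤ i then b ℓ else X ℓ) Y = true) ↔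
          Fh (fun ℓ => if ℓ ≤ i then true else X ℓ)
             (fun ℓ => if ℓ ≤ i then true else !(X ℓ)) Y = true := by
  constructor
  · intro hs i X Y
    constructor
    · rintro ⟨b, hb⟩
      rw [rhs_eq_beta (Fh := Fh) i X Y]
      refine beta_of_F hpos ((i : ℕ) + 1) X _ Y ?_ hb
      intro ℓ hℓ
      have hne : ¬ ℓ ≤ i := by rw [Fin.le_def]; omega
      rw [if_neg hne]
    · intro h
      rw [rhs_eq_beta (Fh := Fh) i X Y] at h
      rcases exists_of_beta hpos hs ((i : ℕ) + 1) i.isLt X Y h with ⟨X', hag, hF⟩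
      refine ⟨X', ?_⟩
      have hfun : (fun ℓ => if ℓ ≤ i then X' ℓ else X ℓ) = X' := by
        funext ℓ
        by_cases hℓ : ℓ ≤ i
        · rw [if_pos hℓ]
        · rw [if_neg hℓ]
          exact (hag ℓ (by rw [Fin.le_def] at hℓ; omega)).symm
      rw [hfun]; exact hF
  · intro hid i X Y h11
    rw [alpha_tt, ← rhs_eq_beta (Fh := Fh) i X Y] at h11
    rcases (hid i X Y).mpr h11 with ⟨b, hb⟩
    have hZ : Fh (fun ℓ => if ℓ ≤ i then b ℓ else X ℓ)
        (fun j => !((fun ℓ => if ℓ ≤ i then b ℓ else X ℓ) j)) Y = true := by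
      rw [hpos.2]; exact hb
    have hbeta : beta Fh (i : ℕ) (Function.update X i (b i)) Y = true := by
      refine mono_both hpos.1 _ _ _ _ _ ?_ ?_ hZ
      · intro ℓ hℓ
        have hℓ' : (if ℓ ≤ i then b ℓ else X ℓ) = true := hℓ
        by_cases hk : (ℓ : ℕ) < (i : ℕ)
        · rw [if_pos hk]
        · rw [if_neg hk]
          by_cases he : ℓ = i
          · subst he
            rw [Function.update_self]
            rwa [if_pos (le_refl ℓ)] at hℓ'
          · rw [Function.update_of_ne he]
            rwa [if_neg (by rw [Fin.le_def]; rw [Fin.ext_iff] at he; omega)] at hℓ'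
      · intro ℓ hℓ
        have hℓ' : (!(if ℓ ≤ i then b ℓ else X ℓ)) = true := hℓ
        by_cases hk : (ℓ : ℕ) < (i : ℕ)
        · rw [if_pos hk]
        · rw [if_neg hk]
          by_cases he : ℓ = i
          · subst he
            rw [Function.update_self]
            rwa [if_pos (le_refl ℓ)] at hℓ'
          · rw [Function.update_of_ne he]
            rwa [if_neg (by rw [Fin.le_def]; rw [Fin.ext_iff] at he; omega)] at hℓ'
    cases hcase : b i with
    | true =>
      left
      rw [hcase] at hbeta
      have h2 : alpha Fh i true (!true) X Y = true := by
        rw [alpha_upd]; exact hbeta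
      exact h2
    | false =>
      right
      rw [hcase] at hbeta
      have h2 : alpha Fh i false (!false) X Y = true := by
        rw [alpha_upd]; exact hbeta
      exact h2
end

section
/- Let F be a specification with n outputs and m inputs, and let F̂ be any positive form of F (no SynNNF assumption). Then for every i : Fin n and all X : Fin n → Bool, Y : Fin m → Bool: if ∃ b : Fin n → Bool, F (fun ℓ => if ℓ ≤ i then b ℓ else X ℓ) Y = true, then F̂ (fun ℓ => if ℓ ≤ i then true else X ℓ) (fun ℓ => if ℓ ≤ i then true else !(X ℓ)) Y = true. That is, setting the first i coordinates of both X and X̄ to true in F̂ and substituting the negations of the remaining outputs for the remaining X̄-coordinates over-approximates the existential quantification of the first i outputs of F. -/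
lemma mono_first {n m : ℕ} {Fh : (Fin n → Bool) → (Fin n → Bool) → (Fin m → Bool) → Bool}
    (h : MonoPos Fh) {X X' Xb : Fin n → Bool} {Y : Fin m → Bool}
    (hle : ∀ ℓ, X ℓ = true → X' ℓ = true) (ht : Fh X Xb Y = true) :
    Fh X' Xb Y = true := by
  have key : ∀ s : Finset (Fin n),
      Fh (fun ℓ => if ℓ ∈ s then X' ℓ else X ℓ) Xb Y = true := by
    intro s
    induction s using Finset.induction with
    | empty => simpa using ht
    | @insert a s ha ih =>
      cases h' : X' a with
      | true =>
        have := (h _ Xb Y a).1 ih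
        convert this using 2
        funext ℓ
        by_cases hℓ : ℓ = a
        · subst hℓ; simp [h', Function.update]
        · simp [Function.update, hℓ, Finset.mem_insert]
      | false =>
        have hXa : X a = false := by
          cases hXa : X a with
          | false => rfl
          | true => rw [hle a hXa] at h'; exact absurd h' (by simp)
        convert ih using 2
        funext ℓ
        by_cases hℓ : ℓ = a
        · subst hℓ; simp [h', hXa, ha]
        · simp [Finset.mem_insert, hℓ]
  have := key Finset.univ
  simpa using this

lemma mono_second {n m : ℕ} {Fh : (Fin n → Bool) → (Fin n → Bool) → (Fin m → Bool) → Bool}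
    (h : MonoPos Fh) {X Xb Xb' : Fin n → Bool} {Y : Fin m → Bool}
    (hle : ∀ ℓ, Xb ℓ = true → Xb' ℓ = true) (ht : Fh X Xb Y = true) :
    Fh X Xb' Y = true := by
  have key : ∀ s : Finset (Fin n),
      Fh X (fun ℓ => if ℓ ∈ s then Xb' ℓ else Xb ℓ) Y = true := by
    intro s
    induction s using Finset.induction with
    | empty => simpa using ht
    | @insert a s ha ih =>
      cases h' : Xb' a with
      | true =>
        have := (h X _ Y a).2 ih
        convert this using 2
        funext ℓ
        by_cases hℓ : ℓ = a
        · subst hℓ; simp [h', Function.update]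
        · simp [Function.update, hℓ, Finset.mem_insert]
      | false =>
        have hXa : Xb a = false := by
          cases hXa : Xb a with
          | false => rfl
          | true => rw [hle a hXa] at h'; exact absurd h' (by simp)
        convert ih using 2
        funext ℓ
        by_cases hℓ : ℓ = a
        · subst hℓ; simp [h', hXa, ha]
        · simp [Finset.mem_insert, hℓ]
  have := key Finset.univ
  simpa using this

/-- For any positive form `Fh` of `F` (no SynNNF assumption), setting the first
`i` coordinates of `X` and `X̄` to `true` over-approximates existential
quantification of the first `i` outputs. -/
theorem positive_form_over_approximates {n m : ℕ}
    (F : (Fin n → Bool) → (Fin m → Bool) → Bool)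
    (Fh : (Fin n → Bool) → (Fin n → Bool) → (Fin m → Bool) → Bool)
    (hpos : PosForm F Fh) :
    ∀ (i : Fin n) (X : Fin n → Bool) (Y : Fin m → Bool),
      (∃ b : Fin n → Bool, F (fun ℓ => if ℓ ≤ i then b ℓ else X ℓ) Y = true) →
        Fh (fun ℓ => if ℓ ≤ i then true else X ℓ)
           (fun ℓ => if ℓ ≤ i then true else !(X ℓ)) Y = true := by
  rintro i X Y ⟨b, hb⟩
  set Z : Fin n → Bool := fun ℓ => if ℓ ≤ i then b ℓ else X ℓ with hZ
  have h0 : Fh Z (fun ℓ => !(Z ℓ)) Y = true := by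
    rw [hpos.2]; exact hb
  have h1 : Fh (fun ℓ => if ℓ ≤ i then true else X ℓ) (fun ℓ => !(Z ℓ)) Y = true := by
    refine mono_first hpos.1 (fun ℓ hℓ => ?_) h0
    simp only [hZ] at hℓ ⊢
    by_cases hli : ℓ ≤ i <;> simp_all
  refine mono_second hpos.1 (fun ℓ hℓ => ?_) h1
  simp only [hZ] at hℓ ⊢
  by_cases hli : ℓ ≤ i <;> simp_all
end

section
/- Let F be a specification with n outputs and m inputs and let i : Fin n. If F is positive unate in output i, i.e., for all X, Y: F (Function.update X i false) Y = true → F (Function.update X i true) Y = true, then (fun X Y => X i && F (Function.update X i true) Y) ≤syn F. Symmetrically, if F is negative unate in output i, i.e., for all X, Y: F (Function.update X i true) Y = true → F (Function.update X i false) Y = true, then (fun X Y => !(X i) && F (Function.update X i false) Y) ≤syn F. -/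
/-- `Ft` refines `F` w.r.t. synthesis (`Ft ≤syn F`). -/
def RefinesSyn {n m : ℕ} (Ft F : (Fin n → Bool) → (Fin m → Bool) → Bool) : Prop :=
  (∀ Y : Fin m → Bool, (∃ X, F X Y = true) → ∃ X', Ft X' Y = true) ∧
  (∀ (Y : Fin m → Bool) (X' : Fin n → Bool),
      ((∃ X, F X Y = true) ∧ Ft X' Y = true) → F X' Y = true)

lemma update_self_eq {n : ℕ} (X : Fin n → Bool) (i : Fin n) (b : Bool) (h : X i = b) :
    Function.update X i b = X := by
  subst h; exact Function.update_eq_self i X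

/-- Unate refinement: if `F` is positive (resp. negative) unate in output `i`,
then `xᵢ ∧ F|_{xᵢ=1}` (resp. `¬xᵢ ∧ F|_{xᵢ=0}`) refines `F`. -/
theorem unate_refines {n m : ℕ}
    (F : (Fin n → Bool) → (Fin m → Bool) → Bool) (i : Fin n) :
    ((∀ (X : Fin n → Bool) (Y : Fin m → Bool),
        F (Function.update X i false) Y = true → F (Function.update X i true) Y = true) →
      RefinesSyn (fun X Y => X i && F (Function.update X i true) Y) F) ∧
    ((∀ (X : Fin n → Bool) (Y : Fin m → Bool),
        F (Function.update X i true) Y = true → F (Function.update X i false) Y = true) →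
      RefinesSyn (fun X Y => !(X i) && F (Function.update X i false) Y) F) := by
  constructor
  · intro hpos
    constructor
    · rintro Y ⟨X, hX⟩
      refine ⟨Function.update X i true, ?_⟩
      simp only [Function.update_self, Function.update_idem, Bool.true_and]
      cases hXi : X i
      · exact hpos X Y (by rwa [update_self_eq X i false hXi])
      · rwa [update_self_eq X i true hXi]
    · rintro Y X' ⟨_, hX'⟩
      simp only [Bool.and_eq_true] at hX'
      obtain ⟨h1, h2⟩ := hX'
      rwa [update_self_eq X' i true h1] at h2
  · intro hneg
    constructor
    · rintro Y ⟨X, hX⟩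
      refine ⟨Function.update X i false, ?_⟩
      simp only [Function.update_self, Function.update_idem, Bool.not_false, Bool.true_and]
      cases hXi : X i
      · rwa [update_self_eq X i false hXi]
      · exact hneg X Y (by rwa [update_self_eq X i true hXi])
    · rintro Y X' ⟨_, hX'⟩
      simp only [Bool.not_eq_true', Bool.and_eq_true] at hX'
      rcases hX' with ⟨h1, h2⟩
      have : X' i = false := by simpa using h1
      rwa [update_self_eq X' i false this] at h2
end

section
/- Let F₁, F₂, F̃₁, F̃₂ be specifications with n outputs and m inputs such that F̃₁ ≤syn F₁ and F̃₂ ≤syn F₂. Suppose there are sets S₁, S₂, S̃₁, S̃₂ ⊆ Fin n with S₁ ∩ S₂ = ∅ and S̃₁ ∩ S̃₂ = ∅ such that F₁ depends only on outputs in S₁, F₂ depends only on outputs in S₂, F̃₁ depends only on outputs in S̃₁, and F̃₂ depends only on outputs in S̃₂. Then (fun X Y => F̃₁ X Y && F̃₂ X Y) ≤syn (fun X Y => F₁ X Y && F₂ X Y). -/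
/-- `H` depends only on the output coordinates in `S`. -/
def DependsOnlyOn {n m : ℕ} (S : Set (Fin n))
    (H : (Fin n → Bool) → (Fin m → Bool) → Bool) : Prop :=
  ∀ (X X' : Fin n → Bool) (Y : Fin m → Bool), (∀ i ∈ S, X i = X' i) → H X Y = H X' Y

/-- Refinement is preserved by conjunction, provided the output supports are disjoint. -/
theorem refines_and_disjoint_supports {n m : ℕ}
    (F₁ F₂ Ft₁ Ft₂ : (Fin n → Bool) → (Fin m → Bool) → Bool)
    (h₁ : RefinesSyn Ft₁ F₁) (h₂ : RefinesSyn Ft₂ F₂)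
    (S₁ S₂ St₁ St₂ : Set (Fin n))
    (hS : S₁ ∩ S₂ = ∅) (hSt : St₁ ∩ St₂ = ∅)
    (hF₁ : DependsOnlyOn S₁ F₁) (hF₂ : DependsOnlyOn S₂ F₂)
    (hFt₁ : DependsOnlyOn St₁ Ft₁) (hFt₂ : DependsOnlyOn St₂ Ft₂) :
    RefinesSyn (fun X Y => Ft₁ X Y && Ft₂ X Y) (fun X Y => F₁ X Y && F₂ X Y) := by
  classical
  constructor
  · intro Y ⟨X, hX⟩
    simp only [Bool.and_eq_true] at hX
    obtain ⟨X₁, hX₁⟩ := h₁.1 Y ⟨X, hX.1⟩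
    obtain ⟨X₂, hX₂⟩ := h₂.1 Y ⟨X, hX.2⟩
    refine ⟨fun i => if i ∈ St₁ then X₁ i else X₂ i, ?_⟩
    simp only [Bool.and_eq_true]
    constructor
    · rw [hFt₁ _ X₁ Y (fun i hi => by simp [hi])]; exact hX₁
    · rw [hFt₂ _ X₂ Y ?_]; exact hX₂
      intro i hi
      have : i ∉ St₁ := fun h => Set.eq_empty_iff_forall_notMem.mp hSt i ⟨h, hi⟩
      simp [this]
  · intro Y X' ⟨⟨X, hX⟩, hX'⟩
    simp only [Bool.and_eq_true] at hX hX' ⊢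
    exact ⟨h₁.2 Y X' ⟨⟨X, hX.1⟩, hX'.1⟩, h₂.2 Y X' ⟨⟨X, hX.2⟩, hX'.2⟩⟩
end

section
/- Let F be a specification with n outputs and m inputs, T ⊆ Fin n, i ∉ T, G a functional-definition map for T, and a : Bool. If θ(F, T, G, i, a) holds, then the specification (fun X Y => (X i == !a) && F (Function.update X i (!a)) Y) satisfies (fun X Y => (X i == !a) && F (Function.update X i (!a)) Y) ≤syn F. (For a = false this is the refinement xᵢ ∧ F|_{xᵢ=1} ≤syn F; for a = true it is ¬xᵢ ∧ F|_{xᵢ=0} ≤syn F.) -/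
/-- `X` satisfies the system of functional definitions `G` for the coordinates in `T`
(given inputs `Y`). -/
def FDefHolds {n m : ℕ} (T : Set (Fin n))
    (G : ({j : Fin n // j ∉ T} → Bool) → (Fin m → Bool) → ({j : Fin n // j ∈ T} → Bool))
    (X : Fin n → Bool) (Y : Fin m → Bool) : Prop :=
  ∀ (j : Fin n) (hj : j ∈ T), X j = G (fun k => X k.1) Y ⟨j, hj⟩

/-- The formula `θ(F, T, G, i, a)`. -/
def Theta {n m : ℕ} (F : (Fin n → Bool) → (Fin m → Bool) → Bool) (T : Set (Fin n))
    (G : ({j : Fin n // j ∉ T} → Bool) → (Fin m → Bool) → ({j : Fin n // j ∈ T} → Bool))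
    (i : Fin n) (a : Bool) : Prop :=
  ∀ (X X' : Fin n → Bool) (Y : Fin m → Bool),
    F (Function.update X i a) Y = true →
    (∀ j : Fin n, j ∉ T → j ≠ i → X' j = X j) →
    X' i = !a →
    FDefHolds T G X' Y →
    F X' Y = true

/-- If `θ(F, T, G, i, a)` holds, then pivoting on `xᵢ` with value `!a` refines `F`. -/
theorem theta_pivot_refines {n m : ℕ}
    (F : (Fin n → Bool) → (Fin m → Bool) → Bool)
    (T : Set (Fin n)) (i : Fin n) (hi : i ∉ T)
    (G : ({j : Fin n // j ∉ T} → Bool) → (Fin m → Bool) → ({j : Fin n // j ∈ T} → Bool))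
    (a : Bool) (htheta : Theta F T G i a) :
    RefinesSyn (fun X Y => (X i == !a) && F (Function.update X i (!a)) Y) F := by
  classical
  constructor
  · rintro Y ⟨X, hX⟩
    by_cases h : F (Function.update X i (!a)) Y = true
    · exact ⟨Function.update X i (!a), by simp [Function.update_idem, h]⟩
    · have hXi : X i = a := by
        by_contra hc
        have heq : Function.update X i (!a) = X := by
          funext j
          by_cases hj : j = i
          · subst hj
            cases a <;> cases hXj : X j <;> simp_all
          · simp [Function.update_of_ne hj]
        rw [heq] at h; exact h hX
      have hFa : F (Function.update X i a) Y = true := by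
        rw [← hXi, Function.update_eq_self]; exact hX
      set base : Fin n → Bool := Function.update X i (!a) with hbase
      set X' : Fin n → Bool :=
        fun j => if hj : j ∈ T then G (fun k => base k.1) Y ⟨j, hj⟩ else base j with hX'
      have hout : ∀ k : Fin n, k ∉ T → X' k = base k := fun k hk => by simp [hX', hk]
      have hX'i : X' i = !a := by rw [hout i hi]; simp [hbase]
      have hfun : (fun k : {j : Fin n // j ∉ T} => X' k.1) = fun k => base k.1 := by
        funext k; exact hout k.1 k.2
      have hfd : FDefHolds T G X' Y := by
        intro j hj
        rw [hfun]
        simp only [hX', dif_pos hj]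
      have hF' : F X' Y = true :=
        htheta X X' Y hFa
          (fun j hj hji => by rw [hout j hj, hbase, Function.update_of_ne hji]) hX'i hfd
      refine ⟨X', ?_⟩
      have hupd : Function.update X' i (!a) = X' := by
        rw [← hX'i, Function.update_eq_self]
      simp [hX'i, hupd, hF']
  · rintro Y X' ⟨⟨X, hX⟩, hFt⟩
    simp only [Bool.and_eq_true, beq_iff_eq] at hFt
    obtain ⟨h1, h2⟩ := hFt
    rwa [← h1, Function.update_eq_self] at h2
end

section
/- Let F be a specification with n outputs and m inputs, let T' ⊆ T ⊆ Fin n with i ∉ T, let G be a functional-definition map for T with associated predicate D and let G' be a functional-definition map for T' with associated predicate D'. Assume F implies both systems of definitions: for all X, Y, F X Y = true → D(X, Y) and F X Y = true → D'(X, Y). Then for every a : Bool, if θ(F, T', G', i, a) holds, then θ(F, T, G, i, a) holds. -/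
/-- A larger acyclic system of functional definitions provides more opportunities
for refinement: if `θ(F, T', G', i, a)` is valid then so is `θ(F, T, G, i, a)`. -/
theorem theta_monotone_in_fdefs {n m : ℕ}
    (F : (Fin n → Bool) → (Fin m → Bool) → Bool)
    (T T' : Set (Fin n)) (hsub : T' ⊆ T) (i : Fin n) (hi : i ∉ T)
    (G : ({j : Fin n // j ∉ T} → Bool) → (Fin m → Bool) → ({j : Fin n // j ∈ T} → Bool))
    (G' : ({j : Fin n // j ∉ T'} → Bool) → (Fin m → Bool) → ({j : Fin n // j ∈ T'} → Bool))
    (hD : ∀ (X : Fin n → Bool) (Y : Fin m → Bool), F X Y = true → FDefHolds T G X Y)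
    (hD' : ∀ (X : Fin n → Bool) (Y : Fin m → Bool), F X Y = true → FDefHolds T' G' X Y)
    (a : Bool) (h : Theta F T' G' i a) :
    Theta F T G i a := by
  classical
  intro X X' Y hF hagree hXi hDX'
  set R : {j : Fin n // j ∉ T'} → Bool := fun k => if k.1 = i then !a else X k.1 with hR
  set X'' : Fin n → Bool :=
    fun j => if hj : j ∈ T' then G' R Y ⟨j, hj⟩ else if j = i then !a else X j with hX''
  have hiT' : i ∉ T' := fun hmem => hi (hsub hmem)
  have hres : (fun k : {j : Fin n // j ∉ T'} => X'' k.1) = R := by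
    funext k
    simp [hX'', hR, k.2]
  have hD'X'' : FDefHolds T' G' X'' Y := by
    intro j hj
    simp only [hX'', dif_pos hj]
    rw [hres]
  have hF'' : F X'' Y = true := by
    apply h X X'' Y hF
    · intro j hj hji
      simp [hX'', hj, hji]
    · simp [hX'', hiT']
    · exact hD'X''
  have hDX'' := hD X'' Y hF''
  have houter : ∀ j : Fin n, j ∉ T → X'' j = X' j := by
    intro j hj
    by_cases hji : j = i
    · subst hji; simp [hX'', hiT', hXi]
    · have hj' : j ∉ T' := fun hmem => hj (hsub hmem)
      rw [hagree j hj hji]; simp [hX'', hj', hji]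
  have hresT : (fun k : {j : Fin n // j ∉ T} => X'' k.1) = (fun k => X' k.1) := by
    funext k; exact houter k.1 k.2
  have heq : X'' = X' := by
    funext j
    by_cases hj : j ∈ T
    · rw [hDX'' j hj, hDX' j hj, hresT]
    · exact houter j hj
  rwa [heq] at hF''
end

section
/- Let Ψ : (Fin m → Bool) → (Fin n → Bool) be arbitrary, define the specification F̃ by F̃ X Y := decide (∀ i, X i = Ψ Y i), and define F̂̃ : (Fin n → Bool) → (Fin n → Bool) → (Fin m → Bool) → Bool by F̂̃ X X̄ Y := decide (∀ i, (X i = true ∧ Ψ Y i = true) ∨ (X̄ i = true ∧ Ψ Y i = false)). Then F̂̃ is a positive form of F̃, and F̃ is in SynNNF w.r.t. F̂̃. -/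
/-- For any function vector `Ψ`, the specification `X = Ψ Y` with the indicated
positive form is in SynNNF. -/
theorem fdef_spec_in_synnnf {n m : ℕ} (Psi : (Fin m → Bool) → Fin n → Bool) :
    PosForm (fun X Y => decide (∀ i, X i = Psi Y i))
        (fun X Xb Y =>
          decide (∀ i, (X i = true ∧ Psi Y i = true) ∨ (Xb i = true ∧ Psi Y i = false))) ∧
    SynNNF (fun X Xb Y =>
        decide (∀ i : Fin n,
          (X i = true ∧ Psi Y i = true) ∨ (Xb i = true ∧ Psi Y i = false))) := by
  constructor
  · constructor
    · intro X Xb Y i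
      constructor <;>
      · intro h
        simp only [decide_eq_true_eq] at h ⊢
        intro j
        rcases h j with ⟨h1, h2⟩ | ⟨h1, h2⟩ <;>
          [left; right] <;> refine ⟨?_, by assumption⟩ <;>
          ((try simp [Function.update]); tauto)
    · intro X Y
      rw [decide_eq_decide]
      constructor
      · intro h j
        rcases h j with ⟨h1, h2⟩ | ⟨h1, h2⟩
        · rw [h1, h2]
        · cases hx : X j <;> simp_all
      · intro h j
        cases hp : Psi Y j
        · right; simp [h j, hp]
        · left; simp [h j, hp]
  · intro i X Y h
    simp only [alpha, decide_eq_true_eq] at h ⊢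
    cases hp : Psi Y i
    · right
      intro j
      rcases h j with ⟨h1, h2⟩ | ⟨h1, h2⟩
      · left
        refine ⟨?_, h2⟩
        by_cases hj : j < i
        · simp [hj]
        · by_cases he : j = i
          · subst he; simp_all
          · simpa [hj, he] using h1
      · right; exact ⟨h1, h2⟩
    · left
      intro j
      rcases h j with ⟨h1, h2⟩ | ⟨h1, h2⟩
      · left; exact ⟨h1, h2⟩
      · right
        refine ⟨?_, h2⟩
        by_cases hj : j < i
        · simp [hj]
        · by_cases he : j = i
          · subst he; simp_all
          · simpa [hj, he] using h1
end

section
/- Let F be a specification with n outputs and m inputs and F̂ a positive form of F. For each i : Fin n, the following are equivalent: (1) there exist X, Y with αᵢ^{11} X Y = true, αᵢ^{10} X Y = false, and αᵢ^{01} X Y = false; (2) there exist X, Y with αᵢ^{11} X Y = true, αᵢ^{10} X Y = false, αᵢ^{01} X Y = false, and additionally αᵢ^{00} X Y = false. (That is, by positive unateness of F̂ in xᵢ and x̄ᵢ, the formula ζ = αᵢ^{11} ∧ ¬αᵢ^{10} ∧ ¬αᵢ^{01} is satisfiable iff ζ ∧ ¬αᵢ^{00} is satisfiable.) -/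
/-- By positive unateness of `Fh` in `xᵢ` and `x̄ᵢ`, the formula
`ζ = αᵢ^{11} ∧ ¬αᵢ^{10} ∧ ¬αᵢ^{01}` is satisfiable iff `ζ ∧ ¬αᵢ^{00}` is satisfiable. -/
theorem zeta_sat_iff_with_alpha00 {n m : ℕ}
    (F : (Fin n → Bool) → (Fin m → Bool) → Bool)
    (Fh : (Fin n → Bool) → (Fin n → Bool) → (Fin m → Bool) → Bool)
    (hpos : PosForm F Fh) (i : Fin n) :
    (∃ (X : Fin n → Bool) (Y : Fin m → Bool),
        alpha Fh i true true X Y = true ∧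
        alpha Fh i true false X Y = false ∧
        alpha Fh i false true X Y = false) ↔
    (∃ (X : Fin n → Bool) (Y : Fin m → Bool),
        alpha Fh i true true X Y = true ∧
        alpha Fh i true false X Y = false ∧
        alpha Fh i false true X Y = false ∧
        alpha Fh i false false X Y = false) := by
  constructor
  · rintro ⟨X, Y, h11, h10, h01⟩
    refine ⟨X, Y, h11, h10, h01, ?_⟩
    by_contra h00
    have h00' : alpha Fh i false false X Y = true := by
      cases h : alpha Fh i false false X Y
      · exact absurd h h00
      · rfl
    have := (hpos.1 (fun ℓ => if ℓ < i then true else if ℓ = i then false else X ℓ)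
      (fun ℓ => if ℓ < i then true else if ℓ = i then false else !(X ℓ)) Y i).2 h00'
    have hupd : Function.update (fun ℓ => if ℓ < i then true else if ℓ = i then false else !(X ℓ)) i true
        = fun ℓ => if ℓ < i then true else if ℓ = i then true else !(X ℓ) := by
      funext ℓ
      by_cases hℓ : ℓ = i
      · subst hℓ; simp [Function.update]
      · simp [Function.update, hℓ]
    rw [hupd] at this
    rw [alpha] at h01
    rw [this] at h01
    exact absurd h01 (by simp)
  · rintro ⟨X, Y, h11, h10, h01, _⟩
    exact ⟨X, Y, h11, h10, h01⟩
end

section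
/- Fix binary operations op₁, …, opₙ on Bool, each equal to Bool.and or Bool.or, and functions f̂₁, …, f̂ₙ, f̂_{n+1} : (Fin n → Bool) → (Fin n → Bool) → (Fin m → Bool) → Bool such that each f̂ᵢ is monotone in every coordinate of its first two arguments and depends only on coordinates ℓ > i of its first two arguments (f̂_{n+1} depends on neither of its first two arguments). Define ĝ : (Fin n → Bool) → (Fin n → Bool) → (Fin m → Bool) → Bool as the right-nested combination ĝ X X̄ Y := (X 1 || f̂₁ X X̄ Y) op₁ ((X 2 || f̂₂ X X̄ Y) op₂ (⋯ ((X n || f̂ₙ X X̄ Y) opₙ (f̂_{n+1} X X̄ Y)) ⋯)). Then ĝ is a positive form of the specification g defined by g X Y := ĝ X (fun j => !(X j)) Y, and g is in SynNNF w.r.t. ĝ. -/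
/-- A function of `(X, X̄, Y)` depends only on coordinates `ℓ > i` of its first
two arguments. -/
def DependsAbove {n m : ℕ} (i : Fin n)
    (f : (Fin n → Bool) → (Fin n → Bool) → (Fin m → Bool) → Bool) : Prop :=
  ∀ (X X' Xb Xb' : Fin n → Bool) (Y : Fin m → Bool),
    (∀ ℓ : Fin n, i < ℓ → X ℓ = X' ℓ) → (∀ ℓ : Fin n, i < ℓ → Xb ℓ = Xb' ℓ) →
      f X Xb Y = f X' Xb' Y

/-- The right-nested combination
`(X 0 || f̂ 0) op 0 ((X 1 || f̂ 1) op 1 (⋯ ((X (n-1) || f̂ (n-1)) op (n-1) f̂ₗₐₛₜ) ⋯))`. -/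
def ghatOr {n m : ℕ} (op : Fin n → Bool → Bool → Bool)
    (fhat : Fin n → (Fin n → Bool) → (Fin n → Bool) → (Fin m → Bool) → Bool)
    (flast : (Fin n → Bool) → (Fin n → Bool) → (Fin m → Bool) → Bool)
    (X Xb : Fin n → Bool) (Y : Fin m → Bool) : Bool :=
  (List.finRange n).foldr (fun i acc => op i (X i || fhat i X Xb Y) acc) (flast X Xb Y)

/-- The family of specifications with all `op'ᵢ = ∨` is in SynNNF. -/
theorem or_family_in_synnnf {n m : ℕ}
    (op : Fin n → Bool → Bool → Bool)
    (hop : ∀ i, op i = Bool.and ∨ op i = Bool.or)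
    (fhat : Fin n → (Fin n → Bool) → (Fin n → Bool) → (Fin m → Bool) → Bool)
    (flast : (Fin n → Bool) → (Fin n → Bool) → (Fin m → Bool) → Bool)
    (hmono : ∀ i, MonoPos (fhat i))
    (hdep : ∀ i, DependsAbove i (fhat i))
    (hmonoLast : MonoPos flast)
    (hindepLast : ∀ (X X' Xb Xb' : Fin n → Bool) (Y : Fin m → Bool),
        flast X Xb Y = flast X' Xb' Y) :
    PosForm (fun X Y => ghatOr op fhat flast X (fun j => !(X j)) Y)
        (ghatOr op fhat flast) ∧
    SynNNF (ghatOr op fhat flast) := by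

  have key : ∀ (l : List (Fin n)) (t t' : Fin n → Bool) (b b' : Bool),
      (b = true → b' = true) → (∀ ℓ, t ℓ = true → t' ℓ = true) →
      l.foldr (fun i acc => op i (t i) acc) b = true →
      l.foldr (fun i acc => op i (t' i) acc) b' = true := by
    intro l
    induction l with
    | nil => intro t t' b b' hb _ h; exact hb h
    | cons a l ih =>
      intro t t' b b' hb ht h
      rcases hop a with h1 | h1 <;> simp only [List.foldr_cons, h1] at h ⊢
      · rw [Bool.and_eq_true] at h ⊢
        exact ⟨ht a h.1, ih t t' b b' hb ht h.2⟩
      · rw [Bool.or_eq_true] at h ⊢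
        rcases h with h | h
        · exact Or.inl (ht a h)
        · exact Or.inr (ih t t' b b' hb ht h)
  have hcongr : ∀ (l : List (Fin n)) (t t' : Fin n → Bool) (b b' : Bool),
      b = b' → (∀ ℓ, t ℓ = t' ℓ) →
      l.foldr (fun i acc => op i (t i) acc) b =
      l.foldr (fun i acc => op i (t' i) acc) b' := by
    intro l
    induction l with
    | nil => intro t t' b b' hb _; exact hb
    | cons a l ih =>
      intro t t' b b' hb ht
      simp only [List.foldr_cons, ht a, ih t t' b b' hb ht]
  refine ⟨⟨?_, fun X Y => rfl⟩, ?_⟩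
  · intro X Xb Y i
    constructor
    · intro h
      unfold ghatOr at h ⊢
      refine key _ _ _ _ _ ?_ ?_ h
      · intro hb
        rw [← hindepLast X (Function.update X i true) Xb Xb Y]; exact hb
      · intro ℓ hl
        rw [Bool.or_eq_true] at hl ⊢
        rcases hl with hl | hl
        · left
          rcases eq_or_ne ℓ i with rfl | hne
          · simp
          · rwa [Function.update_of_ne hne]
        · exact Or.inr ((hmono ℓ X Xb Y i).1 hl)
    · intro h
      unfold ghatOr at h ⊢
      refine key _ _ _ _ _ ?_ ?_ h
      · intro hb
        rw [← hindepLast X X Xb (Function.update Xb i true) Y]; exact hb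
      · intro ℓ hl
        rw [Bool.or_eq_true] at hl ⊢
        rcases hl with hl | hl
        · exact Or.inl hl
        · exact Or.inr ((hmono ℓ X Xb Y i).2 hl)
  · intro i X Y h
    left
    have heq : alpha (ghatOr op fhat flast) i true false X Y
        = alpha (ghatOr op fhat flast) i true true X Y := by
      unfold alpha ghatOr
      apply hcongr
      · exact hindepLast _ _ _ _ _
      · intro ℓ
        rcases lt_trichotomy ℓ i with hlt | hEq | hgt
        · simp [hlt]
        · simp [hEq]
        · have h1 : ¬ ℓ < i := not_lt_of_gt hgt
          have h2 : ℓ ≠ i := ne_of_gt hgt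
          simp only [if_neg h1, if_neg h2]
          congr 1
          refine hdep ℓ _ _ _ _ Y (fun p _ => rfl) ?_
          intro p hp
          have hp1 : ¬ p < i := not_lt_of_gt (lt_trans hgt hp)
          have hp2 : p ≠ i := ne_of_gt (lt_trans hgt hp)
          simp [hp1, hp2]
    rw [heq]; exact h
end

section
/- Fix binary operations op₁, …, opₙ on Bool, each equal to Bool.and or Bool.or, and for each i : Fin n functions f̂ᵢ, n̂ᵢ : (Fin n → Bool) → (Fin n → Bool) → (Fin m → Bool) → Bool that are monotone in every coordinate of their first two arguments, depend only on coordinates ℓ > i of their first two arguments, and satisfy n̂ᵢ X (fun j => !(X j)) Y = !(f̂ᵢ X (fun j => !(X j)) Y) for all X, Y; also fix f̂_{n+1} monotone and depending on neither of its first two arguments. Define the i-th term tᵢ X X̄ Y := (X i || f̂ᵢ X X̄ Y) && (X̄ i || n̂ᵢ X X̄ Y), and define ĝ X X̄ Y := t₁ X X̄ Y op₁ (t₂ X X̄ Y op₂ (⋯ (tₙ X X̄ Y opₙ (f̂_{n+1} X X̄ Y)) ⋯)) (right-nested). Then ĝ is a positive form of the specification g defined by g X Y := ĝ X (fun j =>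 !(X j)) Y (note that under the substitution X̄ = ¬X the i-th term equals xᵢ XOR fᵢ), and g is in SynNNF w.r.t. ĝ. -/
/-- The right-nested combination of the XOR-style terms
`tᵢ = (X i || f̂ᵢ) && (X̄ i || n̂ᵢ)`. -/
def ghatXor {n m : ℕ} (op : Fin n → Bool → Bool → Bool)
    (fhat nhat : Fin n → (Fin n → Bool) → (Fin n → Bool) → (Fin m → Bool) → Bool)
    (flast : (Fin n → Bool) → (Fin n → Bool) → (Fin m → Bool) → Bool)
    (X Xb : Fin n → Bool) (Y : Fin m → Bool) : Bool :=
  (List.finRange n).foldr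
    (fun i acc => op i ((X i || fhat i X Xb Y) && (Xb i || nhat i X Xb Y)) acc)
    (flast X Xb Y)


lemma or_mono' {a a' b b' : Bool} (ha : a = true → a' = true)
    (hb : b = true → b' = true) : (a || b) = true → (a' || b') = true := by
  cases a <;> cases b <;> simp_all

lemma and_mono' {a a' b b' : Bool} (ha : a = true → a' = true)
    (hb : b = true → b' = true) : (a && b) = true → (a' && b') = true := by
  cases a <;> cases b <;> simp_all

lemma fold_mono {n : ℕ} (op : Fin n → Bool → Bool → Bool)
    (hop : ∀ i, op i = Bool.and ∨ op i = Bool.or)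
    (t₁ t₂ : Fin n → Bool) (b₁ b₂ : Bool)
    (ht : ∀ ℓ, t₁ ℓ = true → t₂ ℓ = true) (hb : b₁ = true → b₂ = true) :
    ∀ L : List (Fin n),
      L.foldr (fun ℓ acc => op ℓ (t₁ ℓ) acc) b₁ = true →
      L.foldr (fun ℓ acc => op ℓ (t₂ ℓ) acc) b₂ = true := by
  intro L
  induction L with
  | nil => exact hb
  | cons a L ih =>
    simp only [List.foldr_cons]
    rcases hop a with h | h <;> rw [h]
    · exact and_mono' (ht a) ih
    · exact or_mono' (ht a) ih

lemma fold_eq' {n : ℕ} (op : Fin n → Bool → Bool → Bool)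
    (t₁ t₂ : Fin n → Bool) (b₁ b₂ : Bool)
    (ht : ∀ ℓ, t₁ ℓ = t₂ ℓ) (hb : b₁ = b₂) (L : List (Fin n)) :
    L.foldr (fun ℓ acc => op ℓ (t₁ ℓ) acc) b₁ =
    L.foldr (fun ℓ acc => op ℓ (t₂ ℓ) acc) b₂ := by
  induction L with
  | nil => exact hb
  | cons a L ih => simp only [List.foldr_cons]; rw [ht a, ih]

/-- The first argument of `alpha`. -/
def Avec {n : ℕ} (i : Fin n) (X : Fin n → Bool) (j : Bool) : Fin n → Bool :=
  fun ℓ => if ℓ < i then true else if ℓ = i then j else X ℓ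

/-- The second argument of `alpha`. -/
def Bvec {n : ℕ} (i : Fin n) (X : Fin n → Bool) (k : Bool) : Fin n → Bool :=
  fun ℓ => if ℓ < i then true else if ℓ = i then k else !(X ℓ)

lemma Avec_above {n : ℕ} {i ℓ : Fin n} (X : Fin n → Bool) (j : Bool) (h : i < ℓ) :
    Avec i X j ℓ = X ℓ := by
  simp [Avec, not_lt.mpr h.le, h.ne']

lemma Bvec_above {n : ℕ} {i ℓ : Fin n} (X : Fin n → Bool) (k : Bool) (h : i < ℓ) :
    Bvec i X k ℓ = !(X ℓ) := by
  simp [Bvec, not_lt.mpr h.le, h.ne']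

lemma Avec_self {n : ℕ} (i : Fin n) (X : Fin n → Bool) (j : Bool) :
    Avec i X j i = j := by simp [Avec]

lemma Bvec_self {n : ℕ} (i : Fin n) (X : Fin n → Bool) (k : Bool) :
    Bvec i X k i = k := by simp [Bvec]

/-- The family of specifications with all `op'ᵢ = ⊕` is in SynNNF. -/
theorem xor_family_in_synnnf {n m : ℕ}
    (op : Fin n → Bool → Bool → Bool)
    (hop : ∀ i, op i = Bool.and ∨ op i = Bool.or)
    (fhat nhat : Fin n → (Fin n → Bool) → (Fin n → Bool) → (Fin m → Bool) → Bool)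
    (flast : (Fin n → Bool) → (Fin n → Bool) → (Fin m → Bool) → Bool)
    (hmonoF : ∀ i, MonoPos (fhat i)) (hmonoN : ∀ i, MonoPos (nhat i))
    (hdepF : ∀ i, DependsAbove i (fhat i)) (hdepN : ∀ i, DependsAbove i (nhat i))
    (hneg : ∀ (i : Fin n) (X : Fin n → Bool) (Y : Fin m → Bool),
        nhat i X (fun j => !(X j)) Y = !(fhat i X (fun j => !(X j)) Y))
    (hmonoLast : MonoPos flast)
    (hindepLast : ∀ (X X' Xb Xb' : Fin n → Bool) (Y : Fin m → Bool),
        flast X Xb Y = flast X' Xb' Y) :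
    PosForm (fun X Y => ghatXor op fhat nhat flast X (fun j => !(X j)) Y)
        (ghatXor op fhat nhat flast) ∧
    SynNNF (ghatXor op fhat nhat flast) := by
  constructor
  · refine ⟨?_, fun X Y => rfl⟩
    intro X Xb Y i
    constructor
    · intro h
      unfold ghatXor at h ⊢
      refine fold_mono op hop _ _ _ _ ?_ ((hmonoLast X Xb Y i).1) _ h
      intro ℓ
      refine and_mono' (or_mono' ?_ ((hmonoF ℓ X Xb Y i).1)) (or_mono' id ((hmonoN ℓ X Xb Y i).1))
      intro hx
      rcases eq_or_ne ℓ i with rfl | hne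
      · simp
      · simpa [Function.update_of_ne hne] using hx
    · intro h
      unfold ghatXor at h ⊢
      refine fold_mono op hop _ _ _ _ ?_ ((hmonoLast X Xb Y i).2) _ h
      intro ℓ
      refine and_mono' (or_mono' id ((hmonoF ℓ X Xb Y i).2)) (or_mono' ?_ ((hmonoN ℓ X Xb Y i).2))
      intro hx
      rcases eq_or_ne ℓ i with rfl | hne
      · simp
      · simpa [Function.update_of_ne hne] using hx
  · intro i X Y h11
    have halpha : ∀ j k : Bool, alpha (ghatXor op fhat nhat flast) i j k X Y =
        ghatXor op fhat nhat flast (Avec i X j) (Bvec i X k) Y := fun j k => rfl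
    -- agreement above i
    have hAagree : ∀ (j j' : Bool) (ℓ : Fin n), i < ℓ → Avec i X j ℓ = Avec i X j' ℓ := by
      intro j j' ℓ h; rw [Avec_above X j h, Avec_above X j' h]
    have hBagree : ∀ (k k' : Bool) (ℓ : Fin n), i < ℓ → Bvec i X k ℓ = Bvec i X k' ℓ := by
      intro k k' ℓ h; rw [Bvec_above X k h, Bvec_above X k' h]
    have hfa : ∀ j k : Bool, fhat i (Avec i X j) (Bvec i X k) Y =
        fhat i (Avec i X true) (Bvec i X true) Y := by
      intro j k
      exact hdepF i _ _ _ _ Y (hAagree j true) (hBagree k true)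
    have hna : ∀ j k : Bool, nhat i (Avec i X j) (Bvec i X k) Y =
        !(fhat i (Avec i X true) (Bvec i X true) Y) := by
      intro j k
      have e1 : nhat i (Avec i X j) (Bvec i X k) Y =
          nhat i (Avec i X true) (fun ℓ => !(Avec i X true ℓ)) Y := by
        refine hdepN i _ _ _ _ Y (hAagree j true) ?_
        intro ℓ h
        rw [Bvec_above X k h, Avec_above X true h]
      rw [e1, hneg]
      congr 1
      refine hdepF i _ _ _ _ Y (fun ℓ _ => rfl) ?_
      intro ℓ h
      rw [Avec_above X true h, Bvec_above X true h]
    -- termwise equality, given the term at i agrees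
    have key : ∀ j k : Bool,
        ((j || fhat i (Avec i X true) (Bvec i X true) Y) &&
          (k || !(fhat i (Avec i X true) (Bvec i X true) Y))) = true →
        ghatXor op fhat nhat flast (Avec i X j) (Bvec i X k) Y =
        ghatXor op fhat nhat flast (Avec i X true) (Bvec i X true) Y := by
      intro j k hjk
      unfold ghatXor
      refine fold_eq' op _ _ _ _ ?_ (hindepLast _ _ _ _ Y) _
      intro ℓ
      rcases lt_trichotomy ℓ i with hlt | rfl | hgt
      · have h1 : Avec i X j ℓ = true := by simp [Avec, hlt]
        have h2 : Avec i X true ℓ = true := by simp [Avec, hlt]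
        have h3 : Bvec i X k ℓ = true := by simp [Bvec, hlt]
        have h4 : Bvec i X true ℓ = true := by simp [Bvec, hlt]
        simp [h1, h2, h3, h4]
      · rw [Avec_self, Avec_self, Bvec_self, Bvec_self, hfa j k, hna j k, hna true true,
          hjk]
        simp
      · rw [Avec_above X j hgt, Avec_above X true hgt, Bvec_above X k hgt,
          Bvec_above X true hgt,
          hdepF ℓ _ (Avec i X true) _ (Bvec i X true) Y
            (fun p hp => hAagree j true p (hgt.trans hp))
            (fun p hp => hBagree k true p (hgt.trans hp)),
          hdepN ℓ _ (Avec i X true) _ (Bvec i X true) Y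
            (fun p hp => hAagree j true p (hgt.trans hp))
            (fun p hp => hBagree k true p (hgt.trans hp))]
    rw [halpha true true] at h11
    cases hc : fhat i (Avec i X true) (Bvec i X true) Y
    · left
      rw [halpha true false, key true false (by simp [hc]), h11]
    · right
      rw [halpha false true, key false true (by simp [hc]), h11]
end
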